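/- Let r be a real number and k a nonnegative integer. For every real t with |t| < 1, one has (1+t)^r · (log(1+t))^k / k! = ∑_{n=k}^{∞} S_{1,r}(n+r, k+r) · t^n / n!, the series converging to the left-hand side. -/

import Mathlib

open Polynomial

/-- The polynomial `(X + r)_n = (X+r)(X+r-1)⋯(X+r-n+1)` (falling factorial of `X + r`). -/
noncomputable def fallingPoly (r : ℝ) (n : ℕ) : Polynomial ℝ :=
  ∏ i ∈ Finset.range n, (X + C r - C (i : ℝ))

/-- The `r`-Stirling numbers of the first kind `S_{1,r}(n+r, k+r)`, defined as the
coefficients in `(x+r)_n = ∑_{k=0}^{n} S_{1,r}(n+r, k+r) x^k`. -/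
noncomputable def rStirling1 (r : ℝ) (n k : ℕ) : ℝ :=
  (fallingPoly r n).coeff k

section Aux

open Polynomial Finset Filter

lemma fallingPoly_eq_comp (r : ℝ) (n : ℕ) :
    fallingPoly r n = (fallingPoly 0 n).comp (X + C r) := by
  unfold fallingPoly
  rw [Polynomial.prod_comp]
  refine Finset.prod_congr rfl fun i _ => ?_
  simp [sub_comp]

lemma rStirling1_eq_eval (r : ℝ) (n k : ℕ) :
    rStirling1 r n k = (Polynomial.hasseDeriv k (fallingPoly 0 n)).eval r := by
  rw [rStirling1, fallingPoly_eq_comp, ← Polynomial.taylor_apply, Polynomial.taylor_coeff]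

lemma hasDerivAt_rStirling1 (r : ℝ) (n k : ℕ) :
    HasDerivAt (fun x => rStirling1 x n k) (((k:ℝ)+1) * rStirling1 r n (k+1)) r := by
  simp only [rStirling1_eq_eval]
  have h := Polynomial.hasDerivAt (Polynomial.hasseDeriv k (fallingPoly 0 n)) r
  have h2 := LinearMap.congr_fun (Polynomial.hasseDeriv_comp (R := ℝ) 1 k) (fallingPoly 0 n)
  rw [LinearMap.comp_apply, Polynomial.hasseDeriv_one', Nat.choose_one_right,
    LinearMap.smul_apply] at h2
  rw [h2] at h
  refine h.congr_deriv ?_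
  rw [Polynomial.eval_smul, nsmul_eq_mul, Nat.add_comm 1 k]
  push_cast
  ring

lemma natDegree_fallingPoly (r : ℝ) (n : ℕ) : (fallingPoly r n).natDegree = n := by
  unfold fallingPoly
  have : ∀ i ∈ Finset.range n, (X + C r - C (i:ℝ)) = X + C (r - i) := by
    intro i _; rw [map_sub]; ring
  rw [Finset.prod_congr rfl this, Polynomial.natDegree_prod]
  · have : ∀ i ∈ Finset.range n, (X + C (r - (i:ℝ))).natDegree = 1 := fun i _ => natDegree_X_add_C _
    rw [Finset.sum_congr rfl this]; simp
  · intro i _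
    exact (monic_X_add_C _).ne_zero

lemma rStirling1_eq_zero (r : ℝ) {n k : ℕ} (h : n < k) : rStirling1 r n k = 0 := by
  rw [rStirling1]
  apply Polynomial.coeff_eq_zero_of_natDegree_lt
  rw [natDegree_fallingPoly]; exact h

lemma coeff_prod_bound (a : ℕ → ℝ) (M : ℝ) (hM0 : 0 ≤ M) (hM : ∀ i, |a i| ≤ M + i)
    (n k : ℕ) :
    |(∏ i ∈ Finset.range n, (X + C (a i))).coeff k| ≤ ∏ i ∈ Finset.range n, (1 + (M + i)) := by
  have hpos : (0:ℝ) ≤ ∏ i ∈ Finset.range n, (1 + (M + i)) := by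
    apply Finset.prod_nonneg; intro i _; positivity
  by_cases hk : k ≤ n
  · rw [Finset.prod_X_add_C_coeff _ _ (by simpa using hk)]
    calc |∑ t ∈ (Finset.range n).powersetCard (#(Finset.range n) - k), ∏ i ∈ t, a i|
        ≤ ∑ t ∈ (Finset.range n).powersetCard (#(Finset.range n) - k), |∏ i ∈ t, a i| :=
          Finset.abs_sum_le_sum_abs _ _
      _ ≤ ∑ t ∈ (Finset.range n).powersetCard (#(Finset.range n) - k), ∏ i ∈ t, (M + i) := by
          apply Finset.sum_le_sum; intro t _
          rw [Finset.abs_prod]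
          apply Finset.prod_le_prod (fun i _ => abs_nonneg _) (fun i _ => hM i)
      _ ≤ ∑ t ∈ (Finset.range n).powerset, ∏ i ∈ t, (M + i) := by
          apply Finset.sum_le_sum_of_subset_of_nonneg
          · intro t ht
            exact Finset.mem_powerset.2 (Finset.mem_powersetCard.1 ht).1
          · intro t _ _
            apply Finset.prod_nonneg; intro i hi
            have : (0:ℝ) ≤ (i:ℝ) := Nat.cast_nonneg i
            linarith
      _ = ∏ i ∈ Finset.range n, (1 + (M + i)) := by
          have he : ∏ i ∈ Finset.range n, (1 + (M + (i:ℝ)))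
              = ∑ t ∈ (Finset.range n).powerset,
                  (∏ i ∈ t, (M + (i:ℝ))) * ∏ _i ∈ (Finset.range n) \ t, (1:ℝ) := by
            rw [← Finset.prod_add]
            exact Finset.prod_congr rfl fun i _ => by ring
          rw [he]
          simp
  · rw [Polynomial.coeff_eq_zero_of_natDegree_lt]
    · simpa using hpos
    · have : (∏ i ∈ Finset.range n, (X + C (a i))).natDegree = n := by
        rw [Polynomial.natDegree_prod]
        · have : ∀ i ∈ Finset.range n, (X + C (a i)).natDegree = 1 :=
            fun i _ => natDegree_X_add_C _
          rw [Finset.sum_congr rfl this]; simp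
        · intro i _; exact (monic_X_add_C _).ne_zero
      omega

lemma summable_bound (M q : ℝ) (hM : 1 ≤ M) (hq0 : 0 < q) (hq : q < 1) (j : ℕ) :
    Summable (fun n : ℕ => (∏ i ∈ Finset.range n, (M + i)) * ((n:ℝ)+1)^j * q ^ n / (Nat.factorial n : ℝ)) := by
  set f : ℕ → ℝ := fun n => (∏ i ∈ Finset.range n, (M + i)) * ((n:ℝ)+1)^j * q ^ n / (Nat.factorial n : ℝ) with hfdef
  have hprod : ∀ n : ℕ, 0 < ∏ i ∈ Finset.range n, (M + (i:ℝ)) := by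
    intro n; apply Finset.prod_pos; intro i _
    have : (0:ℝ) ≤ i := Nat.cast_nonneg i
    linarith
  have hfpos : ∀ n, 0 < f n := by
    intro n
    apply div_pos
    · apply mul_pos (mul_pos (hprod n) (by positivity)) (by positivity)
    · exact_mod_cast Nat.factorial_pos n
  have key : ∀ n : ℕ, ‖f (n+1)‖ / ‖f n‖
      = q * ((M + n) / ((n:ℝ)+1)) * (((n:ℝ)+2) / ((n:ℝ)+1))^j := by
    intro n
    rw [Real.norm_eq_abs, Real.norm_eq_abs, abs_of_pos (hfpos _), abs_of_pos (hfpos _), hfdef]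
    simp only
    rw [Finset.prod_range_succ, Nat.factorial_succ, pow_succ]
    have h1 : ((n:ℝ)) + 1 ≠ 0 := by positivity
    have h2 : (Nat.factorial n : ℝ) ≠ 0 := by exact_mod_cast (Nat.factorial_pos n).ne'
    have h3 : (∏ i ∈ Finset.range n, (M + (i:ℝ))) ≠ 0 := (hprod n).ne'
    have h4 : q ^ n ≠ 0 := by positivity
    push_cast
    rw [div_pow]
    field_simp
    ring
  apply summable_of_ratio_test_tendsto_lt_one hq
    (Filter.Eventually.of_forall (fun n => (hfpos n).ne'))
  simp only [key]
  have l1 : Tendsto (fun n : ℕ => (M + n) / ((n:ℝ)+1)) atTop (nhds 1) := by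
    have : (fun n : ℕ => (M + n) / ((n:ℝ)+1)) = fun n : ℕ => 1 + (M - 1) * (1/((n:ℝ)+1)) := by
      funext n
      have h1 : ((n:ℝ)) + 1 ≠ 0 := by positivity
      field_simp
      ring
    rw [this]
    have := tendsto_one_div_add_atTop_nhds_zero_nat (𝕜 := ℝ)
    have h2 : Tendsto (fun n : ℕ => 1 + (M-1) * (1/((n:ℝ)+1))) atTop (nhds (1 + (M-1)*0)) :=
      tendsto_const_nhds.add (tendsto_const_nhds.mul this)
    simpa using h2
  have l2 : Tendsto (fun n : ℕ => (((n:ℝ)+2) / ((n:ℝ)+1))^j) atTop (nhds 1) := by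
    have hb : Tendsto (fun n : ℕ => ((n:ℝ)+2) / ((n:ℝ)+1)) atTop (nhds 1) := by
      have : (fun n : ℕ => ((n:ℝ)+2) / ((n:ℝ)+1)) = fun n : ℕ => 1 + 1/((n:ℝ)+1) := by
        funext n
        have h1 : ((n:ℝ)) + 1 ≠ 0 := by positivity
        field_simp
        ring
      rw [this]
      have h2 : Tendsto (fun n : ℕ => 1 + 1/((n:ℝ)+1)) atTop (nhds (1 + 0)) :=
        tendsto_const_nhds.add tendsto_one_div_add_atTop_nhds_zero_nat
      simpa using h2
    simpa using hb.pow j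
  have := (tendsto_const_nhds (x := q) (f := atTop (α := ℕ))).mul l1 |>.mul l2
  simpa using this

lemma hasSum_binomial (a t : ℝ) (ht : |t| < 1) :
    HasSum (fun n : ℕ => (∏ i ∈ Finset.range n, (a - i)) * t ^ n / (Nat.factorial n : ℝ))
      ((1 + t) ^ a) := by
  set M : ℝ := |a| + 1 with hMdef
  have hM : 1 ≤ M := by rw [hMdef]; have := abs_nonneg a; linarith
  set c : ℕ → ℝ := fun n => (∏ i ∈ Finset.range n, (a - i)) / (Nat.factorial n : ℝ) with hcdef
  have hfactpos : ∀ n : ℕ, (0:ℝ) < (Nat.factorial n : ℝ) := fun n => by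
    exact_mod_cast Nat.factorial_pos n
  have hprodpos : ∀ n : ℕ, 0 < ∏ i ∈ Finset.range n, (M + (i:ℝ)) := by
    intro n; apply Finset.prod_pos; intro i _
    have : (0:ℝ) ≤ i := Nat.cast_nonneg i
    linarith
  have hcbound : ∀ n : ℕ, |c n| ≤ (∏ i ∈ Finset.range n, (M + i)) / (Nat.factorial n : ℝ) := by
    intro n
    rw [hcdef]
    simp only [abs_div, abs_of_pos (hfactpos n)]
    gcongr
    rw [Finset.abs_prod]
    apply Finset.prod_le_prod (fun i _ => abs_nonneg _)
    intro i _
    have h1 : |a - (i:ℝ)| ≤ |a| + |(i:ℝ)| := abs_sub a i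
    have h2 : |(i:ℝ)| = (i:ℝ) := abs_of_nonneg (Nat.cast_nonneg i)
    rw [hMdef]; rw [h2] at h1; linarith
  -- summability at any |y| < 1
  have hsum : ∀ y : ℝ, |y| < 1 → Summable (fun n => c n * y ^ n) := by
    intro y hy
    set q : ℝ := (1 + |y|) / 2 with hqdef
    have hq0 : 0 < q := by have := abs_nonneg y; rw [hqdef]; linarith
    have hq1 : q < 1 := by rw [hqdef]; linarith
    have hyq : |y| ≤ q := by rw [hqdef]; linarith
    apply Summable.of_norm_bounded (summable_bound M q hM hq0 hq1 0)
    intro n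
    simp only [pow_zero, mul_one]
    calc ‖c n * y ^ n‖ = |c n| * |y| ^ n := by
          rw [Real.norm_eq_abs, abs_mul, abs_pow]
      _ ≤ ((∏ i ∈ Finset.range n, (M + i)) / (Nat.factorial n : ℝ)) * q ^ n := by
          apply mul_le_mul (hcbound n) (pow_le_pow_left₀ (abs_nonneg y) hyq n)
            (by positivity) (by positivity)
      _ = (∏ i ∈ Finset.range n, (M + i)) * q ^ n / (Nat.factorial n : ℝ) := by ring
  -- summability of termwise derivatives, with locally uniform bound
  have hderivbound : ∀ q : ℝ, 0 < q → q < 1 → ∀ n : ℕ, ∀ y : ℝ, |y| ≤ q →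
      ‖c n * ((n:ℝ) * y ^ (n-1))‖ ≤
        q⁻¹ * ((∏ i ∈ Finset.range n, (M + i)) * ((n:ℝ)+1)^1 * q ^ n / (Nat.factorial n : ℝ)) := by
    intro q hq0 hq1 n y hyq
    have hq0' : (0:ℝ) ≤ q := le_of_lt hq0
    rw [Real.norm_eq_abs, abs_mul, abs_mul, abs_pow]
    have habsn : |(n:ℝ)| = (n:ℝ) := abs_of_nonneg (Nat.cast_nonneg n)
    rw [habsn]
    calc |c n| * ((n:ℝ) * |y| ^ (n-1))
        ≤ ((∏ i ∈ Finset.range n, (M + i)) / (Nat.factorial n : ℝ)) * (((n:ℝ)+1) * q ^ (n-1)) := by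
          apply mul_le_mul (hcbound n) ?_ (by positivity) (by positivity)
          apply mul_le_mul (by linarith) (pow_le_pow_left₀ (abs_nonneg y) hyq _)
            (by positivity) (by linarith [Nat.cast_nonneg (α := ℝ) n])
      _ ≤ q⁻¹ * ((∏ i ∈ Finset.range n, (M + i)) * ((n:ℝ)+1)^1 * q ^ n / (Nat.factorial n : ℝ)) := by
          rcases n with _ | m
          · simp
            exact (one_le_inv₀ hq0).mpr hq1.le
          · apply le_of_eq
            have hm : (m + 1) - 1 = m := rfl
            rw [hm, pow_one, pow_succ]
            have h2 : (0:ℝ) ≠ (Nat.factorial (m+1) : ℝ) := (hfactpos _).ne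
            field_simp
  have hsumderiv : ∀ y : ℝ, |y| < 1 → Summable (fun n => c n * ((n:ℝ) * y ^ (n-1))) := by
    intro y hy
    set q : ℝ := (1 + |y|) / 2 with hqdef
    have hq0 : 0 < q := by have := abs_nonneg y; rw [hqdef]; linarith
    have hq1 : q < 1 := by rw [hqdef]; linarith
    have hyq : |y| ≤ q := by rw [hqdef]; linarith
    exact Summable.of_norm_bounded ((summable_bound M q hM hq0 hq1 1).mul_left q⁻¹)
      (fun n => hderivbound q hq0 hq1 n y hyq)
  set F : ℝ → ℝ := fun y => ∑' n, c n * y ^ n with hFdef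
  have hFderiv : ∀ y : ℝ, |y| < 1 →
      HasDerivAt F (∑' n, c n * ((n:ℝ) * y ^ (n-1))) y := by
    intro y hy
    set q : ℝ := (1 + |y|) / 2 with hqdef
    have hq0 : 0 < q := by have := abs_nonneg y; rw [hqdef]; linarith
    have hq1 : q < 1 := by rw [hqdef]; linarith
    have hyq : |y| < q := by rw [hqdef]; linarith
    exact hasDerivAt_tsum_of_isPreconnected
      ((summable_bound M q hM hq0 hq1 1).mul_left q⁻¹)
      Metric.isOpen_ball ((convex_ball (0:ℝ) q).isPreconnected)
      (fun n z _ => (hasDerivAt_pow n z).const_mul (c n))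
      (fun n z hz => hderivbound q hq0 hq1 n z
        (le_of_lt (by simpa using mem_ball_zero_iff.mp hz)))
      (by simpa using hyq) (hsum y hy) (by simpa using hyq)
  have hrec : ∀ n : ℕ, c (n+1) * ((n:ℝ)+1) = c n * (a - n) := by
    intro n
    rw [hcdef]
    simp only
    rw [Finset.prod_range_succ, Nat.factorial_succ]
    have h2 := (hfactpos n).ne'
    push_cast
    field_simp
  have hODE : ∀ y : ℝ, |y| < 1 →
      (1+y) * (∑' n, c n * ((n:ℝ) * y ^ (n-1))) = a * F y := by
    intro y hy
    have hs := hsumderiv y hy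
    have hD := hs.hasSum
    set D := ∑' n, c n * ((n:ℝ) * y ^ (n-1)) with hDdef
    have hshift : HasSum (fun n : ℕ => c (n+1) * (((n:ℝ)+1) * y^n)) D := by
      have h := (hasSum_nat_add_iff (f := fun n => c n * ((n:ℝ) * y ^ (n-1))) 1).mpr
        (by simpa using hD)
      have he : (fun n : ℕ => c (n+1) * (((n:ℝ)+1) * y^n))
          = fun n : ℕ => c (n+1) * (((n+1:ℕ):ℝ) * y ^ (n+1-1)) := by
        funext n
        simp [Nat.add_sub_cancel]
      rw [he]
      exact h
    have h1 : HasSum (fun n : ℕ => c n * (a - n) * y^n) D := by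
      have he : (fun n : ℕ => c n * (a - n) * y^n)
          = fun n : ℕ => c (n+1) * (((n:ℝ)+1) * y^n) := by
        funext n
        rw [← mul_assoc, ← hrec n]
      rw [he]
      exact hshift
    have h2 : HasSum (fun n : ℕ => c n * y^n) (F y) := (hsum y hy).hasSum
    have h3 : HasSum (fun n : ℕ => (n:ℝ) * (c n * y^n)) (y * D) := by
      have h := hD.mul_left y
      have he : (fun n : ℕ => (n:ℝ) * (c n * y^n))
          = fun n : ℕ => y * (c n * ((n:ℝ) * y ^ (n-1))) := by
        funext n
        rcases n with _ | m
        · simp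
        · simp only [Nat.add_sub_cancel]
          push_cast
          rw [pow_succ]
          ring
      rw [he]
      exact h
    have h4 := h1.add h3
    have he : (fun n : ℕ => c n * (a - n) * y^n + (n:ℝ) * (c n * y^n))
        = fun n : ℕ => a * (c n * y^n) := by
      funext n; ring
    rw [he] at h4
    have h5 := h2.mul_left a
    have := h4.unique h5
    rw [hDdef]
    linarith [this]
  have hF2 : ∀ y : ℝ, |y| < 1 → HasDerivAt F (a * F y / (1+y)) y := by
    intro y hy
    have hy1 : 0 < 1 + y := by
      rcases abs_lt.mp hy with ⟨h1, h2⟩; linarith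
    have h := hFderiv y hy
    rw [show (∑' n, c n * ((n:ℝ) * y ^ (n-1))) = a * F y / (1+y) from ?_] at h
    · exact h
    · rw [eq_div_iff hy1.ne', mul_comm _ (1+y)]
      exact hODE y hy
  have hcont : ∀ y ∈ Set.Ioo (-1:ℝ) 1, HasDerivAt (fun z => F z * (1+z) ^ (-a)) 0 y := by
    intro y hy
    obtain ⟨hy1, hy2⟩ := hy
    have hypos : 0 < 1 + y := by linarith
    have hyabs : |y| < 1 := abs_lt.mpr ⟨by linarith, hy2⟩
    have hFd := hF2 y hyabs
    have hq : HasDerivAt (fun z : ℝ => (1+z) ^ (-a)) (-a * (1+y) ^ (-a-1)) y := by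
      have h1 : HasDerivAt (fun z : ℝ => 1 + z) 1 y := (hasDerivAt_id y).const_add 1
      have h2 := Real.hasDerivAt_rpow_const (x := 1+y) (p := -a) (Or.inl hypos.ne')
      have h3 := h2.comp y h1
      simpa [Function.comp_def] using h3
    have h := hFd.mul hq
    have hval : a * F y / (1+y) * (1+y) ^ (-a) + F y * (-a * (1+y) ^ (-a-1)) = 0 := by
      have hr : (1+y) ^ (-a-1) = (1+y) ^ (-a) / (1+y) := by
        rw [← Real.rpow_sub_one hypos.ne']
      rw [hr]
      field_simp
      ring
    rw [hval] at h
    exact h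
  have key : ∀ y ∈ Set.Ioo (-1:ℝ) 1, F y * (1+y) ^ (-a) = 1 := by
    intro y hy
    have h0mem : (0:ℝ) ∈ Set.Ioo (-1:ℝ) 1 := by norm_num
    have hconst := (convex_Ioo (-1:ℝ) 1).is_const_of_fderivWithin_eq_zero
      (f := fun z => F z * (1+z) ^ (-a))
      (fun z hz => ((hcont z hz).differentiableAt).differentiableWithinAt)
      (fun z hz => ?_) hy h0mem
    · have hF0 : F 0 = 1 := by
        rw [hFdef]
        simp only
        rw [tsum_eq_single 0 (fun n hn => by simp [zero_pow hn])]
        simp [hcdef]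
      have hconst' : F y * (1+y) ^ (-a) = F 0 * (1+(0:ℝ)) ^ (-a) := hconst
      rw [hconst', hF0]
      norm_num
    · rw [fderivWithin_of_mem_nhds (isOpen_Ioo.mem_nhds hz)]
      have := (hcont z hz).hasFDerivAt.fderiv
      rw [this]
      ext w
      simp
  have htmem : t ∈ Set.Ioo (-1:ℝ) 1 := by
    rcases abs_lt.mp ht with ⟨h1, h2⟩; exact ⟨h1, h2⟩
  have htpos : 0 < 1 + t := by rcases htmem with ⟨h1, _⟩; linarith
  have hFt : F t = (1+t) ^ a := by
    have h := key t htmem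
    rw [Real.rpow_neg htpos.le] at h
    have hne : (1+t) ^ a ≠ 0 := (Real.rpow_pos_of_pos htpos a).ne'
    field_simp at h
    exact h
  have hfinal := (hsum t ht).hasSum
  rw [show (∑' n, c n * t ^ n) = F t from rfl, hFt] at hfinal
  have he : (fun n : ℕ => c n * t ^ n)
      = fun n : ℕ => (∏ i ∈ Finset.range n, (a - i)) * t ^ n / (Nat.factorial n : ℝ) := by
    funext n
    rw [hcdef]
    ring
  rw [he] at hfinal
  exact hfinal

lemma fallingPoly_eq_prod (r : ℝ) (n : ℕ) :
    fallingPoly r n = ∏ i ∈ Finset.range n, (X + C (r - i)) := by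
  unfold fallingPoly
  refine Finset.prod_congr rfl fun i _ => ?_
  rw [map_sub]
  ring

lemma abs_rStirling1_le (r M' : ℝ) (hM0 : 0 ≤ M') (h : ∀ i : ℕ, |r - i| ≤ M' + i)
    (n j : ℕ) : |rStirling1 r n j| ≤ ∏ i ∈ Finset.range n, (1 + (M' + i)) := by
  rw [rStirling1, fallingPoly_eq_prod]
  exact coeff_prod_bound _ M' hM0 h n j

lemma step (t : ℝ) (ht : |t| < 1) (k : ℕ)
    (IH : ∀ r : ℝ, HasSum (fun n : ℕ => rStirling1 r (n + k) k * (t ^ (n + k) / (Nat.factorial (n + k) : ℝ)))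
      ((1 + t) ^ r * Real.log (1 + t) ^ k / (Nat.factorial k : ℝ))) (r₀ : ℝ) :
    HasSum (fun n : ℕ => rStirling1 r₀ (n + (k+1)) (k+1) * (t ^ (n + (k+1)) / (Nat.factorial (n + (k+1)) : ℝ)))
      ((1 + t) ^ r₀ * Real.log (1 + t) ^ (k+1) / (Nat.factorial (k+1) : ℝ)) := by
  have htpos : 0 < 1 + t := by rcases abs_lt.mp ht with ⟨h1, _⟩; linarith
  set q : ℝ := (1 + |t|) / 2 with hqdef
  have hq0 : 0 < q := by have := abs_nonneg t; rw [hqdef]; linarith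
  have hq1 : q < 1 := by rw [hqdef]; linarith
  have htq : |t| ≤ q := by rw [hqdef]; linarith
  set M : ℝ := |r₀| + 2 with hMdef
  have hM1 : 1 ≤ M := by have := abs_nonneg r₀; rw [hMdef]; linarith
  have hfactpos : ∀ n : ℕ, (0:ℝ) < (Nat.factorial n : ℝ) := fun n => by
    exact_mod_cast Nat.factorial_pos n
  set g : ℕ → ℝ → ℝ := fun n y => rStirling1 y (n + k) k * (t ^ (n + k) / (Nat.factorial (n + k) : ℝ)) with hgdef
  set g' : ℕ → ℝ → ℝ := fun n y => (((k:ℝ)+1) * rStirling1 y (n + k) (k+1)) * (t ^ (n + k) / (Nat.factorial (n + k) : ℝ)) with hg'def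
  set u : ℕ → ℝ := fun n => ((k:ℝ)+1) * ((∏ i ∈ Finset.range (n+k), (M + i)) * q ^ (n+k) / (Nat.factorial (n+k) : ℝ)) with hudef
  have hu : Summable u := by
    have h1 := summable_bound M q hM1 hq0 hq1 0
    have h2 : Summable (fun n : ℕ => (∏ i ∈ Finset.range n, (M + i)) * q ^ n / (Nat.factorial n : ℝ)) :=
      h1.congr (fun n => by simp)
    have h3 := (summable_nat_add_iff k).mpr h2
    exact h3.mul_left _
  -- bound on the derivative terms, uniformly for y in ball r₀ 1
  have hbound : ∀ n : ℕ, ∀ y ∈ Metric.ball r₀ 1, ‖g' n y‖ ≤ u n := by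
    intro n y hy
    have hyr : |y - r₀| < 1 := by simpa [Real.dist_eq] using hy
    have hyabs : |y| < |r₀| + 1 := by
      have := abs_sub_abs_le_abs_sub y r₀
      linarith
    have hstir : |rStirling1 y (n+k) (k+1)| ≤ ∏ i ∈ Finset.range (n+k), (M + i) := by
      have h := abs_rStirling1_le y (|r₀| + 1) (by positivity)
        (fun i => by
          have h1 : |y - (i:ℝ)| ≤ |y| + |(i:ℝ)| := abs_sub y i
          have h2 : |(i:ℝ)| = (i:ℝ) := abs_of_nonneg (Nat.cast_nonneg i)
          rw [h2] at h1
          linarith) (n+k) (k+1)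
      refine h.trans (le_of_eq (Finset.prod_congr rfl fun i _ => ?_))
      rw [hMdef]; ring
    rw [hg'def]
    simp only
    rw [Real.norm_eq_abs, abs_mul, abs_mul, abs_div]
    rw [hudef]
    simp only
    have hk1 : |((k:ℝ)+1)| = (k:ℝ)+1 := abs_of_pos (by positivity)
    rw [hk1, abs_pow, abs_of_pos (hfactpos (n+k)), mul_assoc]
    apply mul_le_mul_of_nonneg_left ?_ (by positivity)
    rw [← mul_div_assoc]
    apply div_le_div_of_nonneg_right ?_ (hfactpos _).le
    apply mul_le_mul hstir (pow_le_pow_left₀ (abs_nonneg t) htq _) (by positivity) ?_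
    apply Finset.prod_nonneg
    intro i _
    have : (0:ℝ) ≤ i := Nat.cast_nonneg i
    linarith
  -- each term is differentiable in y
  have hg : ∀ n : ℕ, ∀ y : ℝ, HasDerivAt (g n) (g' n y) y := by
    intro n y
    exact (hasDerivAt_rStirling1 y (n+k) k).mul_const _
  -- the sum of g is the closed form, by IH
  have hsumeq : (fun y : ℝ => ∑' n, g n y)
      = fun y : ℝ => (1 + t) ^ y * Real.log (1 + t) ^ k / (Nat.factorial k : ℝ) := by
    funext y
    exact (IH y).tsum_eq
  -- derivative exchange
  have hDeriv : HasDerivAt (fun y : ℝ => ∑' n, g n y) (∑' n, g' n r₀) r₀ :=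
    hasDerivAt_tsum_of_isPreconnected hu Metric.isOpen_ball
      ((convex_ball r₀ 1).isPreconnected)
      (fun n y _ => hg n y) hbound (Metric.mem_ball_self one_pos)
      (IH r₀).summable (Metric.mem_ball_self one_pos)
  -- derivative of the closed form
  have hClosed : HasDerivAt (fun y : ℝ => (1 + t) ^ y * Real.log (1 + t) ^ k / (Nat.factorial k : ℝ))
      ((1 + t) ^ r₀ * Real.log (1 + t) ^ (k+1) / (Nat.factorial k : ℝ)) r₀ := by
    have h1 := (Real.hasStrictDerivAt_const_rpow htpos r₀).hasDerivAt
    have h2 := h1.mul_const (Real.log (1 + t) ^ k / (Nat.factorial k : ℝ))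
    have he : (fun y : ℝ => (1 + t) ^ y * (Real.log (1 + t) ^ k / (Nat.factorial k : ℝ)))
        = fun y : ℝ => (1 + t) ^ y * Real.log (1 + t) ^ k / (Nat.factorial k : ℝ) := by
      funext y; ring
    rw [he] at h2
    refine h2.congr_deriv ?_
    rw [pow_succ]
    ring
  rw [hsumeq] at hDeriv
  have hval : ∑' n, g' n r₀ = (1 + t) ^ r₀ * Real.log (1 + t) ^ (k+1) / (Nat.factorial k : ℝ) :=
    hDeriv.unique hClosed
  have hsummable : Summable (fun n => g' n r₀) :=
    Summable.of_norm_bounded hu (fun n => hbound n r₀ (Metric.mem_ball_self one_pos))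
  have hHasSum : HasSum (fun n => g' n r₀) ((1 + t) ^ r₀ * Real.log (1 + t) ^ (k+1) / (Nat.factorial k : ℝ)) := by
    rw [← hval]
    exact hsummable.hasSum
  -- drop the zero first term and shift
  have h0 : g' 0 r₀ = 0 := by
    have hz : rStirling1 r₀ (0 + k) (k+1) = 0 := rStirling1_eq_zero r₀ (by omega)
    rw [hg'def]
    simp only [hz]
    ring
  have hshift : HasSum (fun n => g' (n+1) r₀) ((1 + t) ^ r₀ * Real.log (1 + t) ^ (k+1) / (Nat.factorial k : ℝ)) := by
    refine (hasSum_nat_add_iff (f := fun n => g' n r₀) 1).mpr ?_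
    rw [Finset.sum_range_one, h0, add_zero]
    exact hHasSum
  have hfinal := hshift.mul_left (((k:ℝ)+1))⁻¹
  have hk1 : ((k:ℝ)+1) ≠ 0 := by positivity
  have he1 : (fun n : ℕ => (((k:ℝ)+1))⁻¹ * g' (n+1) r₀)
      = fun n : ℕ => rStirling1 r₀ (n + (k+1)) (k+1) * (t ^ (n + (k+1)) / (Nat.factorial (n + (k+1)) : ℝ)) := by
    funext n
    rw [hg'def]
    simp only
    have hnk : n + 1 + k = n + (k+1) := by omega
    rw [hnk, ← mul_assoc, ← mul_assoc, inv_mul_cancel₀ hk1, one_mul]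
  have he2 : (((k:ℝ)+1))⁻¹ * ((1 + t) ^ r₀ * Real.log (1 + t) ^ (k+1) / (Nat.factorial k : ℝ))
      = (1 + t) ^ r₀ * Real.log (1 + t) ^ (k+1) / (Nat.factorial (k+1) : ℝ) := by
    rw [Nat.factorial_succ]
    have := (hfactpos k).ne'
    push_cast
    field_simp
  rw [he1, he2] at hfinal
  exact hfinal


lemma rStirling1_zero (r : ℝ) (n : ℕ) :
    rStirling1 r n 0 = ∏ i ∈ Finset.range n, (r - i) := by
  rw [rStirling1, Polynomial.coeff_zero_eq_eval_zero, fallingPoly_eq_prod, Polynomial.eval_prod]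
  simp

lemma main_aux (t : ℝ) (ht : |t| < 1) (k : ℕ) (r : ℝ) :
    HasSum (fun n : ℕ => rStirling1 r (n + k) k * (t ^ (n + k) / (Nat.factorial (n + k) : ℝ)))
      ((1 + t) ^ r * Real.log (1 + t) ^ k / (Nat.factorial k : ℝ)) := by
  induction k generalizing r with
  | zero =>
    have h := hasSum_binomial r t ht
    have he : (fun n : ℕ => rStirling1 r (n + 0) 0 * (t ^ (n + 0) / (Nat.factorial (n + 0) : ℝ)))
        = fun n : ℕ => (∏ i ∈ Finset.range n, (r - i)) * t ^ n / (Nat.factorial n : ℝ) := by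
      funext n
      rw [Nat.add_zero, rStirling1_zero]
      ring
    rw [he]
    have hv : (1 + t) ^ r * Real.log (1 + t) ^ 0 / (Nat.factorial 0 : ℝ) = (1 + t) ^ r := by
      simp
    rw [hv]
    exact h
  | succ k ih => exact step t ht k ih r

end Aux

/-- For a real `r`, a nonnegative integer `k`, and a real `t` with `|t| < 1`:
`(1+t)^r (log(1+t))^k / k! = ∑_{n=k}^{∞} S_{1,r}(n+r, k+r) t^n / n!`,
the series converging to the left-hand side. -/
theorem hasSum_rStirling1 (r : ℝ) (k : ℕ) (t : ℝ) (ht : |t| < 1) :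
    HasSum (fun n : ℕ => rStirling1 r (n + k) k * t ^ (n + k) / (Nat.factorial (n + k) : ℝ))
      ((1 + t) ^ r * Real.log (1 + t) ^ k / (Nat.factorial k : ℝ)) := by
  have h := main_aux t ht k r
  have he : (fun n : ℕ => rStirling1 r (n + k) k * t ^ (n + k) / (Nat.factorial (n + k) : ℝ))
      = fun n : ℕ => rStirling1 r (n + k) k * (t ^ (n + k) / (Nat.factorial (n + k) : ℝ)) := by
    funext n
    ring
  rw [he]
  exact h
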